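/- arXiv:1606.00124 — 4 statements merged into one kernel-verified Lean document; each statement's English description precedes it below -/
import Mathlib

section
/- Consider minimizing Σ_{i=1}^F f_i e^{-κ p_i T_i} over p ∈ [0,1]^F subject to Σ_i p_i ≤ M, where f_i, κ, T_i > 0 and 0 < M < F. Any minimizer p* satisfies the KKT characterization: there exist ω ≥ 0 and μ_i ≥ 0 such that p_i* = min( max( (1/(κ T_i)) · log( f_i κ T_i / (ω + μ_i) ), 0 ), 1 ) for all i, with complementary slackness ω(Σ_i p_i* - M) = 0 and μ_i(p_i* - 1) = 0. -/
open Real Set Finset Filter Topology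

/-- At the optimum, the budget constraint is tight. -/
lemma P1_sum_eq {F : ℕ} {κ M : ℝ} (hκ : 0 < κ) (hMF : M < F)
    {f T p : Fin F → ℝ} (hf : ∀ i, 0 < f i) (hT : ∀ i, 0 < T i)
    (hbox : ∀ i, p i ∈ Icc (0:ℝ) 1) (hle : ∑ i, p i ≤ M)
    (hopt : IsMinOn (fun q : Fin F → ℝ => ∑ i, f i * Real.exp (-(κ * q i * T i)))
      {q : Fin F → ℝ | (∀ i, q i ∈ Icc (0:ℝ) 1) ∧ ∑ i, q i ≤ M} p) :
    ∑ i, p i = M := by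
  by_contra hne
  have hlt : ∑ i, p i < M := lt_of_le_of_ne hle hne
  have hexj : ∃ j, p j < 1 := by
    by_contra h
    push_neg at h
    have h1 : ∀ i, p i = 1 := fun i => le_antisymm (hbox i).2 (h i)
    have : (F : ℝ) = ∑ i, p i := by simp [h1]
    linarith
  obtain ⟨j, hj⟩ := hexj
  set ε := min (1 - p j) (M - ∑ i, p i) with hεdef
  have hε0 : 0 < ε := lt_min (by linarith) (by linarith)
  have hε1 : ε ≤ 1 - p j := min_le_left _ _
  have hε2 : ε ≤ M - ∑ i, p i := min_le_right _ _
  set q := Function.update p j (p j + ε) with hq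
  have hsplit : ∀ g : Fin F → ℝ, ∑ x, g x = g j + ∑ x ∈ Finset.univ \ {j}, g x := by
    intro g
    have := Finset.sum_update_of_mem (Finset.mem_univ j) g (g j)
    simpa [Function.update_eq_self] using this
  have hqsum : ∑ x, q x = ∑ x, p x + ε := by
    rw [Finset.sum_update_of_mem (Finset.mem_univ j) p (p j + ε), hsplit p]
    ring
  have hqfeas : q ∈ {q : Fin F → ℝ | (∀ i, q i ∈ Icc (0:ℝ) 1) ∧ ∑ i, q i ≤ M} := by
    constructor
    · intro x
      by_cases hx : x = j
      · subst hx
        simp only [hq, Function.update_self]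
        exact ⟨by linarith [(hbox x).1], by linarith⟩
      · simpa [hq, Function.update_of_ne hx] using hbox x
    · rw [hqsum]; linarith
  have hmin := hopt hqfeas
  simp only [Set.mem_setOf_eq] at hmin
  have hrest : ∀ x ∈ Finset.univ \ {j}, f x * Real.exp (-(κ * q x * T x))
      = f x * Real.exp (-(κ * p x * T x)) := by
    intro x hx
    have hxj : x ≠ j := by
      simpa using (Finset.mem_sdiff.mp hx).2
    rw [hq, Function.update_of_ne hxj]
  have hobjq : ∑ x, f x * Real.exp (-(κ * q x * T x))
      = f j * Real.exp (-(κ * (p j + ε) * T j))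
        + ∑ x ∈ Finset.univ \ {j}, f x * Real.exp (-(κ * p x * T x)) := by
    rw [hsplit (fun x => f x * Real.exp (-(κ * q x * T x)))]
    simp only [hq, Function.update_self]
    exact congrArg _ (Finset.sum_congr rfl hrest)
  have hobjp : ∑ x, f x * Real.exp (-(κ * p x * T x))
      = f j * Real.exp (-(κ * p j * T j))
        + ∑ x ∈ Finset.univ \ {j}, f x * Real.exp (-(κ * p x * T x)) :=
    hsplit (fun x => f x * Real.exp (-(κ * p x * T x)))
  have hstrict : Real.exp (-(κ * (p j + ε) * T j)) < Real.exp (-(κ * p j * T j)) := by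
    apply Real.exp_lt_exp.mpr
    have : 0 < κ * ε * T j := mul_pos (mul_pos hκ hε0) (hT j)
    nlinarith
  have := hf j
  nlinarith [hmin, hobjq, hobjp]

/-- Exchange lemma: at the optimum, mass cannot profitably be moved from `j` to `i`. -/
lemma P1_exch {F : ℕ} {κ M : ℝ} (hκ : 0 < κ)
    {f T p : Fin F → ℝ} (hf : ∀ i, 0 < f i) (hT : ∀ i, 0 < T i)
    (hbox : ∀ i, p i ∈ Icc (0:ℝ) 1) (hle : ∑ i, p i ≤ M)
    (hopt : IsMinOn (fun q : Fin F → ℝ => ∑ i, f i * Real.exp (-(κ * q i * T i)))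
      {q : Fin F → ℝ | (∀ i, q i ∈ Icc (0:ℝ) 1) ∧ ∑ i, q i ≤ M} p)
    {i j : Fin F} (hij : i ≠ j) (hi : p i < 1) (hj : 0 < p j) :
    f i * κ * T i * Real.exp (-(κ * p i * T i))
      ≤ f j * κ * T j * Real.exp (-(κ * p j * T j)) := by
  set ε₀ := min (1 - p i) (p j) with hε₀def
  have hε₀ : 0 < ε₀ := lt_min (by linarith) hj
  have hε₀1 : ε₀ ≤ 1 - p i := min_le_left _ _
  have hε₀2 : ε₀ ≤ p j := min_le_right _ _
  set Q : ℝ → Fin F → ℝ :=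
    fun ε x => p x + (if x = i then ε else 0) + (if x = j then -ε else 0) with hQ
  set φ : ℝ → ℝ := fun ε =>
    f i * Real.exp (-(κ * (p i + ε) * T i)) + f j * Real.exp (-(κ * (p j - ε) * T j)) with hφ
  have hQi : ∀ ε, Q ε i = p i + ε := by
    intro ε; simp [hQ, hij]
  have hQj : ∀ ε, Q ε j = p j - ε := by
    intro ε; simp [hQ, Ne.symm hij]; ring
  have hQo : ∀ ε x, x ≠ i → x ≠ j → Q ε x = p x := by
    intro ε x hxi hxj; simp [hQ, hxi, hxj]
  have hQsum : ∀ ε, ∑ x, Q ε x = ∑ x, p x := by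
    intro ε
    simp [hQ, Finset.sum_add_distrib, Finset.sum_ite_eq']
  have hφmin : ∀ ε ∈ Ioo (0:ℝ) ε₀, φ 0 ≤ φ ε := by
    intro ε hε
    have hQfeas : Q ε ∈ {q : Fin F → ℝ | (∀ i, q i ∈ Icc (0:ℝ) 1) ∧ ∑ i, q i ≤ M} := by
      constructor
      · intro x
        by_cases hxi : x = i
        · subst hxi
          rw [hQi]
          exact ⟨by linarith [(hbox x).1, hε.1], by linarith [hε.2]⟩
        · by_cases hxj : x = j
          · subst hxj
            rw [hQj]
            exact ⟨by linarith [hε.2], by linarith [(hbox x).2, hε.1]⟩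
          · rw [hQo ε x hxi hxj]; exact hbox x
      · rw [hQsum]; exact hle
    have hmin := hopt hQfeas
    simp only [Set.mem_setOf_eq] at hmin
    -- difference of objectives equals φ ε - φ 0
    have hdiff : (∑ x, f x * Real.exp (-(κ * Q ε x * T x)))
        - (∑ x, f x * Real.exp (-(κ * p x * T x))) = φ ε - φ 0 := by
      rw [← Finset.sum_sub_distrib]
      have hzero : ∀ x ∈ (univ : Finset (Fin F)), x ∉ ({i, j} : Finset (Fin F)) →
          f x * Real.exp (-(κ * Q ε x * T x)) - f x * Real.exp (-(κ * p x * T x)) = 0 := by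
        intro x _ hx
        simp only [Finset.mem_insert, Finset.mem_singleton, not_or] at hx
        rw [hQo ε x hx.1 hx.2, sub_self]
      rw [← Finset.sum_subset (Finset.subset_univ ({i, j} : Finset (Fin F))) hzero,
        Finset.sum_pair hij, hQi, hQj]
      simp only [hφ]
      ring_nf
    linarith [hmin, hdiff]
  -- derivative of φ at 0
  have h1 : HasDerivAt (fun ε : ℝ => p i + ε) 1 0 := by
    simpa using (hasDerivAt_id (0:ℝ)).const_add (p i)
  have h2 : HasDerivAt (fun ε : ℝ => -(κ * (p i + ε) * T i)) (-(κ * 1 * T i)) 0 :=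
    ((h1.const_mul κ).mul_const (T i)).neg
  have h4 : HasDerivAt (fun ε : ℝ => f i * Real.exp (-(κ * (p i + ε) * T i)))
      (f i * (Real.exp (-(κ * (p i + 0) * T i)) * -(κ * 1 * T i))) 0 :=
    h2.exp.const_mul (f i)
  have k1 : HasDerivAt (fun ε : ℝ => p j - ε) (-1) 0 := by
    simpa using (hasDerivAt_id (0:ℝ)).const_sub (p j)
  have k2 : HasDerivAt (fun ε : ℝ => -(κ * (p j - ε) * T j)) (-(κ * (-1) * T j)) 0 :=
    ((k1.const_mul κ).mul_const (T j)).neg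
  have k4 : HasDerivAt (fun ε : ℝ => f j * Real.exp (-(κ * (p j - ε) * T j)))
      (f j * (Real.exp (-(κ * (p j - 0) * T j)) * -(κ * (-1) * T j))) 0 :=
    k2.exp.const_mul (f j)
  have hd : HasDerivAt φ
      (f i * (Real.exp (-(κ * (p i + 0) * T i)) * -(κ * 1 * T i))
        + f j * (Real.exp (-(κ * (p j - 0) * T j)) * -(κ * (-1) * T j))) 0 := h4.add k4
  have hten : Tendsto (slope φ 0) (𝓝[>] (0:ℝ))
      (𝓝 (f i * (Real.exp (-(κ * (p i + 0) * T i)) * -(κ * 1 * T i))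
        + f j * (Real.exp (-(κ * (p j - 0) * T j)) * -(κ * (-1) * T j)))) := by
    refine (hasDerivAt_iff_tendsto_slope.mp hd).mono_left (nhdsWithin_mono _ ?_)
    intro x hx
    simpa using ne_of_gt hx
  have hev : ∀ᶠ ε in 𝓝[>] (0:ℝ), 0 ≤ slope φ 0 ε := by
    filter_upwards [Ioo_mem_nhdsGT_of_mem (⟨le_refl (0:ℝ), hε₀⟩ : (0:ℝ) ∈ Ico (0:ℝ) ε₀)]
      with ε hε
    rw [slope_def_field]
    rw [sub_zero]
    exact div_nonneg (by linarith [hφmin ε hε]) (le_of_lt hε.1)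
  have hD0 : 0 ≤ f i * (Real.exp (-(κ * (p i + 0) * T i)) * -(κ * 1 * T i))
      + f j * (Real.exp (-(κ * (p j - 0) * T j)) * -(κ * (-1) * T j)) :=
    ge_of_tendsto hten hev
  simp only [add_zero, sub_zero] at hD0
  nlinarith [hD0]

/-- KKT characterization of the optimal caching probabilities for Problem P1:
any minimizer p* of Σ_i f_i e^{-κ p_i T_i} over [0,1]^F with Σ_i p_i ≤ M admits
multipliers ω ≥ 0, μ_i ≥ 0 such that
p_i* = min(max((1/(κ T_i)) log(f_i κ T_i/(ω+μ_i)), 0), 1) with complementary slackness. -/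
theorem P1_kkt_characterization (F : ℕ) (κ M : ℝ) (hκ : 0 < κ)
    (hM0 : 0 < M) (hMF : M < F)
    (f T : Fin F → ℝ) (hf : ∀ i, 0 < f i) (hT : ∀ i, 0 < T i)
    (p : Fin F → ℝ)
    (hfeas : p ∈ {q : Fin F → ℝ | (∀ i, q i ∈ Icc (0:ℝ) 1) ∧ ∑ i, q i ≤ M})
    (hopt : IsMinOn (fun q : Fin F → ℝ => ∑ i, f i * Real.exp (-(κ * q i * T i)))
      {q : Fin F → ℝ | (∀ i, q i ∈ Icc (0:ℝ) 1) ∧ ∑ i, q i ≤ M} p) :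
    ∃ ω : ℝ, ∃ μ : Fin F → ℝ, 0 ≤ ω ∧ (∀ i, 0 ≤ μ i) ∧
      (∀ i, p i = min (max ((1 / (κ * T i)) * Real.log (f i * κ * T i / (ω + μ i))) 0) 1) ∧
      ω * (∑ i, p i - M) = 0 ∧
      (∀ i, μ i * (p i - 1) = 0) := by
  obtain ⟨hbox, hle⟩ := hfeas
  have hsum : ∑ i, p i = M := P1_sum_eq hκ hMF hf hT hbox hle hopt
  set D : Fin F → ℝ := fun i => f i * κ * T i * Real.exp (-(κ * p i * T i)) with hD
  have hDpos : ∀ i, 0 < D i := by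
    intro i
    have := hf i; have := hT i
    positivity
  have hsne : (Finset.univ.filter (fun i => p i < 1)).Nonempty := by
    by_contra h
    rw [Finset.not_nonempty_iff_eq_empty, Finset.filter_eq_empty_iff] at h
    push_neg at h
    have h1 : ∀ i, p i = 1 := fun i => le_antisymm (hbox i).2 (h (Finset.mem_univ i))
    have : (F : ℝ) = ∑ i, p i := by simp [h1]
    rw [hsum] at this
    linarith
  set ω := (Finset.univ.filter (fun i => p i < 1)).sup' hsne D with hω
  obtain ⟨k, hkmem, hωk⟩ := Finset.exists_mem_eq_sup' hsne D
  have hk : p k < 1 := (Finset.mem_filter.mp hkmem).2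
  have hωpos : 0 < ω := by rw [hω, hωk]; exact hDpos k
  have hωub : ∀ i, p i < 1 → D i ≤ ω :=
    fun i hi => Finset.le_sup' D (Finset.mem_filter.mpr ⟨Finset.mem_univ i, hi⟩)
  have hωlb : ∀ i, 0 < p i → ω ≤ D i := by
    intro i hi
    rw [hω, hωk]
    by_cases h : k = i
    · subst h; exact le_refl _
    · exact P1_exch hκ hf hT hbox hle hopt h hk hi
  refine ⟨ω, fun i => if p i = 1 then D i - ω else 0, le_of_lt hωpos, ?_, ?_, ?_, ?_⟩
  · intro i
    by_cases h : p i = 1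
    · simp only [if_pos h]
      have := hωlb i (by rw [h]; norm_num)
      linarith
    · simp [if_neg h]
  · intro i
    rcases (hbox i) with ⟨hi0, hi1⟩
    have hclamp : ∀ w : ℝ, w = D i →
        p i = min (max ((1 / (κ * T i)) * Real.log (f i * κ * T i / w)) 0) 1 := by
      intro w hw
      have hTi := hT i; have hfi := hf i
      have hexp : f i * κ * T i / w = Real.exp (κ * p i * T i) := by
        rw [hw, hD]
        simp only
        rw [Real.exp_neg]
        field_simp
      rw [hexp, Real.log_exp]
      have : (1 / (κ * T i)) * (κ * p i * T i) = p i := by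
        field_simp
      rw [this, max_eq_left hi0, min_eq_left hi1]
    rcases eq_or_lt_of_le hi0 with h0 | h0
    · -- p i = 0
      have hne1 : p i ≠ 1 := by rw [← h0]; norm_num
      simp only [if_neg hne1, add_zero]
      have hDi : D i = f i * κ * T i := by
        rw [hD]; simp [← h0]
      have hDle : f i * κ * T i ≤ ω := by rw [← hDi]; exact hωub i (by rw [← h0]; norm_num)
      have hlog : Real.log (f i * κ * T i / ω) ≤ 0 := by
        apply Real.log_nonpos
        · exact le_of_lt (div_pos (mul_pos (mul_pos (hf i) hκ) (hT i)) hωpos)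
        · rw [div_le_one hωpos]; exact hDle
      have hfac : (1 / (κ * T i)) * Real.log (f i * κ * T i / ω) ≤ 0 := by
        apply mul_nonpos_of_nonneg_of_nonpos _ hlog
        exact le_of_lt (one_div_pos.mpr (mul_pos hκ (hT i)))
      rw [max_eq_right hfac, min_eq_left (by norm_num : (0:ℝ) ≤ 1), ← h0]
    · rcases eq_or_lt_of_le hi1 with h1 | h1
      · -- p i = 1
        simp only [if_pos h1]
        exact hclamp (ω + (D i - ω)) (by ring)
      · -- 0 < p i < 1
        have hne1 : p i ≠ 1 := ne_of_lt h1
        simp only [if_neg hne1, add_zero]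
        exact hclamp ω (le_antisymm (hωlb i h0) (hωub i h1))
  · rw [hsum, sub_self, mul_zero]
  · intro i
    by_cases h : p i = 1
    · rw [h, sub_self, mul_zero]
    · simp [if_neg h]
end

section
/- In the KKT system for Problem P1, the multiplier ranges partition as follows: p_i = 1 holds iff ω ≤ f_i κ T_i e^{-κ T_i} (with μ_i = [f_i κ T_i e^{-κ T_i} - ω]^+); 0 < p_i < 1 holds iff f_i κ T_i e^{-κ T_i} < ω < f_i κ T_i (with μ_i = 0); and p_i = 0 holds iff ω ≥ f_i κ T_i (with μ_i = 0). -/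
open Real

/-- Multiplier ranges in the KKT system of Problem P1 (single content, index dropped).
Given the KKT stationarity f κ T e^{-κ p T} = ω + μ, complementary slackness
μ(p-1) = 0, with p ∈ [0,1], μ ≥ 0, ω > 0, the partition of multiplier ranges holds:
p = 1 iff ω ≤ f κ T e^{-κT} (and then μ = [f κ T e^{-κT} - ω]^+),
0 < p < 1 iff f κ T e^{-κT} < ω < f κ T (and then μ = 0),
p = 0 iff ω ≥ f κ T (and then μ = 0). -/
theorem P1_multiplier_ranges (f κ T ω μ p : ℝ)
    (hf : 0 < f) (hκ : 0 < κ) (hT : 0 < T) (hω : 0 < ω) (hμ : 0 ≤ μ)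
    (hp0 : 0 ≤ p) (hp1 : p ≤ 1)
    (hstat : f * κ * T * Real.exp (-(κ * p * T)) = ω + μ)
    (hcs : μ * (p - 1) = 0) :
    ((p = 1 ↔ ω ≤ f * κ * T * Real.exp (-(κ * T))) ∧
      (p = 1 → μ = max (f * κ * T * Real.exp (-(κ * T)) - ω) 0)) ∧
    ((0 < p ∧ p < 1 ↔ f * κ * T * Real.exp (-(κ * T)) < ω ∧ ω < f * κ * T) ∧
      (0 < p ∧ p < 1 → μ = 0)) ∧
    ((p = 0 ↔ f * κ * T ≤ ω) ∧ (p = 0 → μ = 0)) := by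
  have hA : 0 < f * κ * T := by positivity
  have hcs' : μ = 0 ∨ p = 1 := by
    rcases mul_eq_zero.mp hcs with h | h
    · exact Or.inl h
    · exact Or.inr (by linarith)
  -- if p = 1, stationarity reads A e^{-κT} = ω + μ
  have hstat1 : p = 1 → f * κ * T * Real.exp (-(κ * T)) = ω + μ := by
    intro h1
    have : κ * p * T = κ * T := by rw [h1]; ring
    rw [← this]; exact hstat
  -- if p < 1 then μ = 0 and ω = A e^{-κpT}
  have hlt : p < 1 → μ = 0 ∧ ω = f * κ * T * Real.exp (-(κ * p * T)) := by
    intro hplt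
    have hμ0 : μ = 0 := hcs'.resolve_right (by intro h; exact absurd h (ne_of_lt hplt))
    exact ⟨hμ0, by rw [hstat, hμ0, add_zero]⟩
  -- p = 1 ↔ ω ≤ A e^{-κT}
  have hiff1 : p = 1 ↔ ω ≤ f * κ * T * Real.exp (-(κ * T)) := by
    constructor
    · intro h1
      have := hstat1 h1
      linarith
    · intro hle
      by_contra hne
      have hplt : p < 1 := lt_of_le_of_ne hp1 hne
      obtain ⟨hμ0, hωeq⟩ := hlt hplt
      have hexp : Real.exp (-(κ * T)) < Real.exp (-(κ * p * T)) := by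
        apply Real.exp_lt_exp.mpr
        nlinarith
      nlinarith [mul_lt_mul_of_pos_left hexp hA]
  have hexp_pos : 0 < Real.exp (-(κ * p * T)) := Real.exp_pos _
  have hexp_le1 : Real.exp (-(κ * p * T)) ≤ 1 := by
    apply Real.exp_le_one_iff.mpr
    nlinarith
  refine ⟨⟨hiff1, ?_⟩, ⟨?_, fun h => (hlt h.2).1⟩, ?_, fun h0 => (hlt (by linarith)).1⟩
  · intro h1
    have h := hstat1 h1
    rw [max_eq_left (by linarith)]
    linarith
  · constructor
    · rintro ⟨hpp, hpl⟩
      obtain ⟨hμ0, hωeq⟩ := hlt hpl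
      have hexp1 : Real.exp (-(κ * T)) < Real.exp (-(κ * p * T)) := by
        apply Real.exp_lt_exp.mpr; nlinarith
      have hexp2 : Real.exp (-(κ * p * T)) < 1 := by
        apply Real.exp_lt_one_iff.mpr; · nlinarith
      constructor
      · nlinarith [mul_lt_mul_of_pos_left hexp1 hA]
      · nlinarith [mul_lt_mul_of_pos_left hexp2 hA]
    · rintro ⟨hgt, hltA⟩
      have hp1' : p ≠ 1 := by
        intro h1
        have := hiff1.mp h1
        linarith
      have hplt : p < 1 := lt_of_le_of_ne hp1 hp1'
      obtain ⟨hμ0, hωeq⟩ := hlt hplt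
      refine ⟨?_, hplt⟩
      by_contra hn
      have hp0' : p = 0 := le_antisymm (not_lt.mp hn) hp0
      rw [hp0'] at hωeq
      simp at hωeq
      linarith
  · constructor
    · intro h0
      obtain ⟨hμ0, hωeq⟩ := hlt (by linarith)
      rw [h0] at hωeq
      simp at hωeq
      linarith
    · intro hge
      have hp1' : p ≠ 1 := by
        intro h1
        have := hiff1.mp h1
        nlinarith [Real.exp_lt_one_iff.mpr (show -(κ*T) < 0 by nlinarith)]
      obtain ⟨hμ0, hωeq⟩ := hlt (lt_of_le_of_ne hp1 hp1')
      have : Real.exp (-(κ * p * T)) = 1 := by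
        by_contra hne
        have : Real.exp (-(κ * p * T)) < 1 := lt_of_le_of_ne hexp_le1 hne
        nlinarith
      have h0 : -(κ * p * T) = 0 := Real.exp_eq_exp.mp (by rw [this, Real.exp_zero])
      nlinarith
end

section
/- Consider maximizing Σ_{i=1}^F f_i · p_i/((1 - A_i)p_i + B_i) over p ∈ [0,1]^F subject to Σ_i p_i ≤ M, where f_i > 0, 0 < A_i ≤ 1, B_i > A_i. This is a concave maximization over a convex set, and any maximizer p* satisfies: there exist ω ≥ 0 and μ_i ≥ 0 with p_i* = min( max( (1/(1-A_i))(-B_i + √(f_i B_i/(ω + μ_i))), 0 ), 1 ) for all i (when A_i < 1), together with complementary slackness conditions ω(Σ_i p_i* - M) = 0 and μ_i(p_i* - 1) = 0. -/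
open Real Set Finset

/-! Each summand `x ↦ x / ((1 - A) x + B)` is concave on `[0, ∞)` with derivative
`B / ((1 - A) x + B)²`, so at a maximizer `p` the first-order condition says that `p` also
maximizes the linear functional `q ↦ ∑ Dᵢ qᵢ`, `Dᵢ = fᵢ Bᵢ / ((1 - Aᵢ) pᵢ + Bᵢ)² > 0`, over the
constraint set. Moving mass from a coordinate `j` with `pⱼ > 0` to a coordinate `i` with `pᵢ < 1`
shows `Dᵢ ≤ Dⱼ`; hence `ω := max {Dᵢ | pᵢ < 1}` and `μᵢ := Dᵢ - ω` on the coordinates with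
`pᵢ = 1` are KKT multipliers, and the closed form inverts `Dᵢ = ω + μᵢ` (clamped at `pᵢ = 0`). -/

lemma ConcaveOn.fun_sum {𝕜 E β ι : Type*} [Semiring 𝕜] [PartialOrder 𝕜] [AddCommMonoid E]
    [AddCommMonoid β] [PartialOrder β] [IsOrderedAddMonoid β] [SMul 𝕜 E] [Module 𝕜 β]
    {s : Set E} (hs : Convex 𝕜 s) {t : Finset ι} {g : ι → E → β}
    (hg : ∀ i ∈ t, ConcaveOn 𝕜 s (g i)) : ConcaveOn 𝕜 s fun x => ∑ i ∈ t, g i x := by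
  simp_rw [← Finset.sum_apply]
  exact Finset.sum_induction _ (ConcaveOn 𝕜 s) (fun _ _ => .add) (concaveOn_const 0 hs) hg

lemma concaveOn_div_mul_add {c B : ℝ} (hc : 0 ≤ c) (hB : 0 < B) :
    ConcaveOn ℝ (Ici 0) fun x => x / (c * x + B) := by
  refine ⟨convex_Ici 0, fun x (hx : 0 ≤ x) y (hy : 0 ≤ y) a b ha hb hab => ?_⟩
  have hdx : 0 < c * x + B := by positivity
  have hdy : 0 < c * y + B := by positivity
  have hd : 0 < c * (a * x + b * y) + B := by positivity
  simp only [smul_eq_mul]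
  rw [mul_div_assoc', mul_div_assoc', div_add_div _ _ hdx.ne' hdy.ne',
    div_le_div_iff₀ (by positivity) hd]
  obtain rfl : b = 1 - a := by linarith
  nlinarith [mul_nonneg (mul_nonneg (mul_nonneg ha hb) hc) (mul_nonneg hB.le (sq_nonneg (x - y)))]

lemma hasDerivAt_div_mul_add {c B x : ℝ} (h : c * x + B ≠ 0) :
    HasDerivAt (fun x => x / (c * x + B)) (B / (c * x + B) ^ 2) x :=
  ((hasDerivAt_id' x).fun_div (((hasDerivAt_id' x).const_mul c).add_const B) h).congr_deriv
    (by ring)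

lemma IsMaxOn.sum_deriv_mul_sub_nonpos {ι : Type*} [Fintype ι] {S : Set (ι → ℝ)}
    (hS : Convex ℝ S) {g : ι → ℝ → ℝ} {g' : ι → ℝ} {p q : ι → ℝ}
    (hmax : IsMaxOn (fun q => ∑ i, g i (q i)) S p) (hg : ∀ i, HasDerivAt (g i) (g' i) (p i))
    (hp : p ∈ S) (hq : q ∈ S) : ∑ i, g' i * (q i - p i) ≤ 0 := by
  have hderiv : HasFDerivAt (fun q => ∑ i, g i (q i))
      (∑ i, g' i • ContinuousLinearMap.proj (R := ℝ) (φ := fun _ : ι => ℝ) i) p :=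
    HasFDerivAt.fun_sum fun i _ => (hg i).comp_hasFDerivAt p (hasFDerivAt_apply i p)
  simpa using hmax.localize.hasFDerivWithinAt_nonpos hderiv.hasFDerivWithinAt
    (sub_mem_posTangentConeAt_of_segment_subset (hS.segment_subset hp hq))

section BoxWithBudget

variable {ι : Type*} [Fintype ι]

def boxWithBudget (M : ℝ) : Set (ι → ℝ) := {q | (∀ i, q i ∈ Icc (0 : ℝ) 1) ∧ ∑ i, q i ≤ M}

lemma convex_boxWithBudget (M : ℝ) : Convex ℝ (boxWithBudget (ι := ι) M) := by
  have hbox : {q : ι → ℝ | ∀ i, q i ∈ Icc (0 : ℝ) 1} = univ.pi fun _ => Icc 0 1 := by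
    ext; simp [Pi.le_def, forall_and]
  rw [boxWithBudget, ofPred_and, hbox]
  refine (convex_pi fun i _ => convex_Icc 0 1).inter
    (convex_halfSpace_le ⟨fun x y => ?_, fun a x => ?_⟩ M)
  · simp [Finset.sum_add_distrib]
  · simp [Finset.mul_sum]

variable {M : ℝ} {D p : ι → ℝ}

lemma le_of_forall_sum_mul_sub_nonpos (hp : p ∈ boxWithBudget M)
    (hvi : ∀ q ∈ boxWithBudget M, ∑ k, D k * (q k - p k) ≤ 0) {i j : ι}
    (hi : p i < 1) (hj : 0 < p j) : D i ≤ D j := by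
  classical
  set t := min (1 - p i) (p j)
  have ht : 0 < t := lt_min (by linarith) hj
  have hti : t ≤ 1 - p i := min_le_left _ _
  have htj : t ≤ p j := min_le_right _ _
  have hq : p + (Pi.single i t - Pi.single j t) ∈ boxWithBudget M := by
    refine ⟨fun k => ?_, ?_⟩
    · obtain ⟨h0, h1⟩ := hp.1 k
      simp only [Pi.sub_apply, Pi.add_apply, Pi.single_apply]
      split_ifs <;> subst_vars <;> constructor <;> linarith
    · simpa [Finset.sum_sub_distrib, Finset.sum_add_distrib] using hp.2
  have := hvi _ hq
  simp only [Pi.add_apply, add_sub_cancel_left] at this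
  simp only [Pi.sub_apply, Pi.single_apply, mul_sub, mul_ite, mul_zero, Finset.sum_sub_distrib,
    Finset.sum_ite_eq', Finset.mem_univ, if_true] at this
  nlinarith

lemma nonpos_of_forall_sum_mul_sub_nonpos (hp : p ∈ boxWithBudget M)
    (hvi : ∀ q ∈ boxWithBudget M, ∑ k, D k * (q k - p k) ≤ 0) (hM : ∑ k, p k < M) {i : ι}
    (hi : p i < 1) : D i ≤ 0 := by
  classical
  set t := min (1 - p i) (M - ∑ k, p k)
  have ht : 0 < t := lt_min (by linarith) (by linarith)
  have hti : t ≤ 1 - p i := min_le_left _ _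
  have htM : t ≤ M - ∑ k, p k := min_le_right _ _
  have hq : p + Pi.single i t ∈ boxWithBudget M := by
    refine ⟨fun k => ?_, ?_⟩
    · obtain ⟨h0, h1⟩ := hp.1 k
      simp only [Pi.add_apply, Pi.single_apply]
      split_ifs <;> subst_vars <;> constructor <;> linarith
    · simp only [Pi.add_apply, Finset.sum_add_distrib, Finset.sum_pi_single', Finset.mem_univ,
        if_true]
      linarith
  have := hvi _ hq
  simp only [Pi.add_apply, add_sub_cancel_left, Pi.single_apply, mul_ite, mul_zero,
    Finset.sum_ite_eq', Finset.mem_univ, if_true] at this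
  exact nonpos_of_mul_nonpos_left this ht

lemma exists_kkt_multipliers (hp : p ∈ boxWithBudget M)
    (hvi : ∀ q ∈ boxWithBudget M, ∑ k, D k * (q k - p k) ≤ 0) (hD : ∀ i, 0 < D i) :
    ∃ ω : ℝ, ∃ μ : ι → ℝ, 0 ≤ ω ∧ (∀ i, 0 ≤ μ i) ∧ (∀ i, D i ≤ ω + μ i) ∧
      (∀ i, 0 < p i → ω + μ i = D i) ∧ ω * (∑ i, p i - M) = 0 ∧
      ∀ i, μ i * (p i - 1) = 0 := by
  classical
  -- over an empty index type the real supremum is `0`, the right value for a slack budget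
  set ω := ⨆ i : {i // p i < 1}, D i
  have hle : ∀ i, p i < 1 → D i ≤ ω := fun i hi =>
    le_ciSup (f := fun i : {i // p i < 1} => D i) (Set.finite_range _).bddAbove ⟨i, hi⟩
  have hge : ∀ j, 0 < p j → ω ≤ D j := by
    intro j hj
    cases isEmpty_or_nonempty {i // p i < 1} with
    | inl _ => simpa [ω] using (hD j).le
    | inr _ =>
      obtain ⟨⟨i, hi⟩, hωi⟩ := exists_eq_ciSup_of_finite (f := fun i : {i // p i < 1} => D i)
      exact hωi.symm.trans_le (le_of_forall_sum_mul_sub_nonpos hp hvi hi hj)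
  have hslack : ∑ i, p i < M → ω = 0 := by
    intro hM
    have : IsEmpty {i // p i < 1} :=
      ⟨fun ⟨i, hi⟩ => (hD i).not_ge (nonpos_of_forall_sum_mul_sub_nonpos hp hvi hM hi)⟩
    exact Real.iSup_of_isEmpty _
  refine ⟨ω, fun i => if p i = 1 then D i - ω else 0, Real.iSup_nonneg fun i => (hD i).le,
    fun i => ?_, fun i => ?_, fun i hi => ?_, ?_, fun i => ?_⟩
  · dsimp only
    split_ifs with h1
    · linarith [hge i (by linarith)]
    · rfl
  · dsimp only
    split_ifs with h1
    · linarith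
    · linarith [hle i (lt_of_le_of_ne (hp.1 i).2 h1)]
  · dsimp only
    split_ifs with h1
    · ring
    · linarith [hle i (lt_of_le_of_ne (hp.1 i).2 h1), hge i hi]
  · rcases hp.2.lt_or_eq with hM | hM
    · simp [hslack hM]
    · simp [hM]
  · dsimp only
    split_ifs with h1 <;> simp [h1]

end BoxWithBudget

lemma eq_min_max_of_marginal_le {c B f x ν : ℝ} (hc : 0 < c) (hB : 0 < B) (hf : 0 < f)
    (hx : x ∈ Icc (0 : ℝ) 1) (hle : f * (B / (c * x + B) ^ 2) ≤ ν)
    (heq : 0 < x → ν = f * (B / (c * x + B) ^ 2)) :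
    x = min (max ((1 / c) * (-B + √(f * B / ν))) 0) 1 := by
  have hd : 0 < c * x + B := add_pos_of_nonneg_of_pos (mul_nonneg hc.le hx.1) hB
  have hν : 0 < ν := lt_of_lt_of_le (by positivity) hle
  have hsqrt : √(f * B / ν) ≤ c * x + B := by
    rw [Real.sqrt_le_left hd.le, div_le_iff₀ hν, ← div_le_iff₀' (by positivity)]
    rwa [mul_div_assoc]
  have hy : (1 / c) * (-B + √(f * B / ν)) ≤ x := by
    rw [one_div_mul_eq_div, div_le_iff₀ hc]; linarith
  rcases hx.1.eq_or_lt with rfl | hpos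
  · rw [max_eq_right hy]; norm_num
  · have hy' : (1 / c) * (-B + √(f * B / ν)) = x := by
      have hfB : f * B / (f * (B / (c * x + B) ^ 2)) = (c * x + B) ^ 2 := by field_simp
      rw [heq hpos, hfB, Real.sqrt_sq hd.le]
      field_simp
      ring
    rw [hy', max_eq_left hx.1, min_eq_left hx.2]

theorem P3_kkt_characterization_general (F : ℕ) (M : ℝ)
    (f A B : Fin F → ℝ) (hf : ∀ i, 0 < f i)
    (hA0 : ∀ i, 0 < A i) (hA1 : ∀ i, A i ≤ 1) (hBA : ∀ i, A i < B i) :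
    letI S : Set (Fin F → ℝ) :=
      {q : Fin F → ℝ | (∀ i, q i ∈ Icc (0:ℝ) 1) ∧ ∑ i, q i ≤ M}
    letI obj : (Fin F → ℝ) → ℝ :=
      fun q => ∑ i, f i * (q i / ((1 - A i) * q i + B i))
    Convex ℝ S ∧ ConcaveOn ℝ S obj ∧
    (∀ p : Fin F → ℝ, p ∈ S → IsMaxOn obj S p →
      ∃ ω : ℝ, ∃ μ : Fin F → ℝ, 0 ≤ ω ∧ (∀ i, 0 ≤ μ i) ∧
        (∀ i, A i < 1 →
          p i = min (max ((1 / (1 - A i)) *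
            (-B i + Real.sqrt (f i * B i / (ω + μ i)))) 0) 1) ∧
        ω * (∑ i, p i - M) = 0 ∧
        (∀ i, μ i * (p i - 1) = 0)) := by
  have hB : ∀ i, 0 < B i := fun i => (hA0 i).trans (hBA i)
  have hc : ∀ i, 0 ≤ 1 - A i := fun i => sub_nonneg.2 (hA1 i)
  refine ⟨convex_boxWithBudget M, ?_, fun p hp hmax => ?_⟩
  · exact ConcaveOn.fun_sum (convex_boxWithBudget M) fun i _ =>
      (((concaveOn_div_mul_add (hc i) (hB i)).smul (hf i).le).comp_linearMap
        (LinearMap.proj i)).subset (fun q hq => (hq.1 i).1) (convex_boxWithBudget M)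
  have hd : ∀ i, 0 < (1 - A i) * p i + B i := fun i =>
    add_pos_of_nonneg_of_pos (mul_nonneg (hc i) (hp.1 i).1) (hB i)
  have hderiv : ∀ i, HasDerivAt (fun x => f i * (x / ((1 - A i) * x + B i)))
      (f i * (B i / ((1 - A i) * p i + B i) ^ 2)) (p i) := fun i =>
    (hasDerivAt_div_mul_add (hd i).ne').const_mul (f i)
  obtain ⟨ω, μ, hω, hμ, hle, heq, hbudget, hcap⟩ := exists_kkt_multipliers hp
    (fun q hq => hmax.sum_deriv_mul_sub_nonpos (convex_boxWithBudget M) hderiv hp hq)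
    (fun i => mul_pos (hf i) (div_pos (hB i) (pow_pos (hd i) 2)))
  exact ⟨ω, μ, hω, hμ, fun i hAi => eq_min_max_of_marginal_le (by linarith) (hB i) (hf i)
    (hp.1 i) (hle i) (heq i), hbudget, hcap⟩

/-- Problem P3: maximizing Σ_i f_i p_i/((1-A_i)p_i + B_i) over [0,1]^F with
Σ_i p_i ≤ M is a concave maximization over a convex set, and any maximizer p*
admits KKT multipliers ω ≥ 0, μ_i ≥ 0 with the closed-form expression
p_i* = min(max((1/(1-A_i))(-B_i + √(f_i B_i/(ω+μ_i))), 0), 1) whenever A_i < 1,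
together with complementary slackness. -/
theorem P3_kkt_characterization (F : ℕ) (M : ℝ) (hM0 : 0 < M) (hMF : M ≤ F)
    (f A B : Fin F → ℝ) (hf : ∀ i, 0 < f i)
    (hA0 : ∀ i, 0 < A i) (hA1 : ∀ i, A i ≤ 1) (hBA : ∀ i, A i < B i) :
    letI S : Set (Fin F → ℝ) :=
      {q : Fin F → ℝ | (∀ i, q i ∈ Icc (0:ℝ) 1) ∧ ∑ i, q i ≤ M}
    letI obj : (Fin F → ℝ) → ℝ :=
      fun q => ∑ i, f i * (q i / ((1 - A i) * q i + B i))
    Convex ℝ S ∧ ConcaveOn ℝ S obj ∧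
    (∀ p : Fin F → ℝ, p ∈ S → IsMaxOn obj S p →
      ∃ ω : ℝ, ∃ μ : Fin F → ℝ, 0 ≤ ω ∧ (∀ i, 0 ≤ μ i) ∧
        (∀ i, A i < 1 →
          p i = min (max ((1 / (1 - A i)) *
            (-B i + Real.sqrt (f i * B i / (ω + μ i)))) 0) 1) ∧
        ω * (∑ i, p i - M) = 0 ∧
        (∀ i, μ i * (p i - 1) = 0)) :=
  P3_kkt_characterization_general F M f A B hf hA0 hA1 hBA
end

section
/- In the KKT system for Problem P3, the multiplier ranges are: p_i = 1 iff ω ≤ f_i B_i/(1 - A_i + B_i)², with μ_i = [f_i B_i/(1 - A_i + B_i)² - ω]^+; 0 < p_i < 1 iff f_i B_i/(1 - A_i + B_i)² < ω < f_i/B_i, with μ_i = 0; and p_i = 0 iff ω ≥ f_i/B_i, with μ_i = 0. -/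
/-!
The left-hand side of the stationarity condition, `g p = f B / ((1 - A) p + B) ^ 2`, is strictly
decreasing on `[0, 1]` from `g 0 = f / B` to `g 1 = f B / (1 - A + B) ^ 2`. Complementary
slackness forces `μ = 0` unless `p = 1`, so comparing `ω` with these two endpoint values locates `p`.
-/

open Set

theorem strictAntiOn_div_sq_affine {c d b : ℝ} (hc : 0 < c) (hd : 0 < d) (hb : 0 < b) :
    StrictAntiOn (fun x => c / (d * x + b) ^ 2) (Ici 0) := by
  intro x hx y _ hxy
  have hx' : 0 < d * x + b := by have : (0 : ℝ) ≤ x := hx; positivity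
  dsimp only
  gcongr

theorem multiplier_ranges_of_strictAntiOn {g : ℝ → ℝ} (hg : StrictAntiOn g (Icc 0 1))
    {ω μ p : ℝ} (hμ : 0 ≤ μ) (hp : p ∈ Icc 0 1) (hstat : g p = ω + μ)
    (hcs : μ * (p - 1) = 0) :
    ((p = 1 ↔ ω ≤ g 1) ∧ (p = 1 → μ = max (g 1 - ω) 0)) ∧
    ((0 < p ∧ p < 1 ↔ g 1 < ω ∧ ω < g 0) ∧ (0 < p ∧ p < 1 → μ = 0)) ∧
    ((p = 0 ↔ g 0 ≤ ω) ∧ (p = 0 → μ = 0)) := by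
  have hμ_eq_zero : p < 1 → μ = 0 := fun h =>
    (mul_eq_zero.mp hcs).resolve_right (sub_ne_zero.mpr h.ne)
  have zero_mem : (0 : ℝ) ∈ Icc 0 1 := left_mem_Icc.mpr zero_le_one
  have one_mem : (1 : ℝ) ∈ Icc 0 1 := right_mem_Icc.mpr zero_le_one
  have h_one : p = 1 ↔ ω ≤ g 1 := by
    refine ⟨fun h => by subst h; linarith, fun h => ?_⟩
    by_contra hne
    have hlt : p < 1 := lt_of_le_of_ne hp.2 hne
    have := hg hp one_mem hlt
    rw [hstat, hμ_eq_zero hlt] at this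
    linarith
  have h_zero : p = 0 ↔ g 0 ≤ ω := by
    refine ⟨fun h => ?_, fun h => ?_⟩
    · subst h
      rw [hstat, hμ_eq_zero zero_lt_one, add_zero]
    · by_contra hne
      have := hg zero_mem hp (lt_of_le_of_ne hp.1 (Ne.symm hne))
      linarith
  refine ⟨⟨h_one, fun h => ?_⟩, ⟨⟨?_, ?_⟩, fun h => hμ_eq_zero h.2⟩, h_zero, fun h => ?_⟩
  · subst h
    rw [max_eq_left (by linarith)]
    linarith
  · rintro ⟨hp0, hp1⟩
    exact ⟨not_le.mp (mt h_one.mpr hp1.ne), not_le.mp (mt h_zero.mpr hp0.ne')⟩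
  · rintro ⟨h1, h0⟩
    exact ⟨lt_of_le_of_ne hp.1 (Ne.symm (mt h_zero.mp h0.not_ge)),
      lt_of_le_of_ne hp.2 (mt h_one.mp h1.not_ge)⟩
  · exact hμ_eq_zero (h ▸ zero_lt_one)

theorem P3_multiplier_ranges_general (f A B ω μ p : ℝ)
    (hf : 0 < f) (hA0 : 0 < A) (hA1 : A < 1) (hBA : A < B)
    (hμ : 0 ≤ μ) (hp0 : 0 ≤ p) (hp1 : p ≤ 1)
    (hstat : f * B / ((1 - A) * p + B) ^ 2 = ω + μ)
    (hcs : μ * (p - 1) = 0) :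
    ((p = 1 ↔ ω ≤ f * B / (1 - A + B) ^ 2) ∧
      (p = 1 → μ = max (f * B / (1 - A + B) ^ 2 - ω) 0)) ∧
    ((0 < p ∧ p < 1 ↔ f * B / (1 - A + B) ^ 2 < ω ∧ ω < f / B) ∧
      (0 < p ∧ p < 1 → μ = 0)) ∧
    ((p = 0 ↔ f / B ≤ ω) ∧ (p = 0 → μ = 0)) := by
  have hB : 0 < B := hA0.trans hBA
  have hg := (strictAntiOn_div_sq_affine (mul_pos hf hB) (sub_pos.mpr hA1) hB).mono
    (Icc_subset_Ici_self : Icc (0 : ℝ) 1 ⊆ _)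
  have h_left : f * B / B ^ 2 = f / B := by field_simp
  simpa only [mul_one, mul_zero, zero_add, h_left] using
    multiplier_ranges_of_strictAntiOn hg hμ ⟨hp0, hp1⟩ hstat hcs

/-- Multiplier ranges in the KKT system of Problem P3 (single content, index dropped).
Given stationarity f B/((1-A)p+B)² = ω + μ, complementary slackness μ(p-1) = 0,
with p ∈ [0,1], μ ≥ 0, ω > 0, 0 < A < 1, B > A:
p = 1 iff ω ≤ f B/(1-A+B)² (and then μ = [f B/(1-A+B)² - ω]^+),
0 < p < 1 iff f B/(1-A+B)² < ω < f/B (and then μ = 0),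
p = 0 iff ω ≥ f/B (and then μ = 0). -/
theorem P3_multiplier_ranges (f A B ω μ p : ℝ)
    (hf : 0 < f) (hA0 : 0 < A) (hA1 : A < 1) (hBA : A < B)
    (hω : 0 < ω) (hμ : 0 ≤ μ) (hp0 : 0 ≤ p) (hp1 : p ≤ 1)
    (hstat : f * B / ((1 - A) * p + B) ^ 2 = ω + μ)
    (hcs : μ * (p - 1) = 0) :
    ((p = 1 ↔ ω ≤ f * B / (1 - A + B) ^ 2) ∧
      (p = 1 → μ = max (f * B / (1 - A + B) ^ 2 - ω) 0)) ∧
    ((0 < p ∧ p < 1 ↔ f * B / (1 - A + B) ^ 2 < ω ∧ ω < f / B) ∧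
      (0 < p ∧ p < 1 → μ = 0)) ∧
    ((p = 0 ↔ f / B ≤ ω) ∧ (p = 0 → μ = 0)) :=
  P3_multiplier_ranges_general f A B ω μ p hf hA0 hA1 hBA hμ hp0 hp1 hstat hcs
end
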